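/- arXiv:1912.03505 — 6 statements merged into one kernel-verified Lean document; each statement's English description precedes it below -/
import Mathlib

section
/- Let (X,𝒪) be an L-valued topological space and u an open filter of X. Then for every B ∈ 𝒪 it holds that u(B) = ⨆_{A∈𝒪} u(A) ⊓ sub(A,B) and u(B) = ⨅_{A∈𝒪} (sub(B,A) ⇨ u(A)). -/
variable {L : Type*} {X : Type*} {Y : Type*}

/-- `sub(A,B) = ⨅ x, A x ⇨ B x` for `L`-subsets `A B : X → L`. -/
def subL [Order.Frame L] (A B : X → L) : L := ⨅ x, A x ⇨ B x

/-- An `L`-valued topology on `X`: a family of `L`-subsets closed under binary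
pointwise infima, arbitrary pointwise suprema, containing all constants. -/
structure IsLTopology [Order.Frame L] (𝒪 : Set (X → L)) : Prop where
  inf_mem : ∀ A B : X → L, A ∈ 𝒪 → B ∈ 𝒪 → A ⊓ B ∈ 𝒪
  sSup_mem : ∀ S : Set (X → L), S ⊆ 𝒪 → sSup S ∈ 𝒪
  const_mem : ∀ a : L, (fun _ => a : X → L) ∈ 𝒪

/-- An open filter of `(X, 𝒪)`: a map `u : 𝒪 → L` with `u (A ⊓ B) = u A ⊓ u B`
and `u (a_X) ≥ a`. -/
structure LFilter [Order.Frame L] (𝒪 : Set (X → L)) where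
  toFun : ↥𝒪 → L
  map_inf : ∀ (A B : ↥𝒪) (h : (A : X → L) ⊓ (B : X → L) ∈ 𝒪),
    toFun ⟨(A : X → L) ⊓ (B : X → L), h⟩ = toFun A ⊓ toFun B
  const_le : ∀ (a : L) (h : (fun _ => a : X → L) ∈ 𝒪), a ≤ toFun ⟨fun _ => a, h⟩

/-- `φ(A)(u) = u(A)`. -/
def phiF [Order.Frame L] (𝒪 : Set (X → L)) (A : ↥𝒪) : LFilter 𝒪 → L := fun u => u.toFun A

/-- The `L`-valued topology on `Φ_L(X)` generated by the base `{φ(A) | A ∈ 𝒪}`: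
its members are exactly the suprema `⨆_j φ(A_j) ⊓ (a_j)_const`. -/
def filtOpens [Order.Frame L] (𝒪 : Set (X → L)) : Set (LFilter 𝒪 → L) :=
  { W | ∃ S : Set (↥𝒪 × L), W = fun u => ⨆ p ∈ S, u.toFun p.1 ⊓ p.2 }

/-- The pointed filter `[x](A) = A(x)`. -/
def ptFilter [Order.Frame L] (𝒪 : Set (X → L)) (x : X) : LFilter 𝒪 where
  toFun A := (A : X → L) x
  map_inf _ _ _ := rfl
  const_le _ _ := le_rfl

/-- The filter `[S](A) = sub(S, A)` for an `L`-subset `S`. -/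
def prFilter [Order.Frame L] (𝒪 : Set (X → L)) (S : X → L) : LFilter 𝒪 where
  toFun A := subL S (A : X → L)
  map_inf A B h := by
    simp only [subL, Pi.inf_apply, himp_inf_distrib]
    exact iInf_inf_eq
  const_le a h := le_iInf fun x => le_himp_iff.2 inf_le_left

/-- `Φ_L f` for a continuous map `f`. -/
def filtMap [Order.Frame L] (𝒪X : Set (X → L)) (𝒪Y : Set (Y → L)) (f : X → Y)
    (hf : ∀ B : ↥𝒪Y, (B : Y → L) ∘ f ∈ 𝒪X) (u : LFilter 𝒪X) : LFilter 𝒪Y where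
  toFun B := u.toFun ⟨(B : Y → L) ∘ f, hf B⟩
  map_inf A B h := u.map_inf ⟨(A : Y → L) ∘ f, hf A⟩ ⟨(B : Y → L) ∘ f, hf B⟩
    (hf ⟨(A : Y → L) ⊓ (B : Y → L), h⟩)
  const_le a h := u.const_le a (hf ⟨fun _ => a, h⟩)

lemma phi_mem [Order.Frame L] (𝒪 : Set (X → L)) (A : ↥𝒪) : phiF 𝒪 A ∈ filtOpens 𝒪 := by
  refine ⟨{(A, ⊤)}, ?_⟩
  funext u
  simp [phiF]

lemma LFilter.mono [Order.Frame L] {𝒪 : Set (X → L)} (u : LFilter 𝒪) (A B : ↥𝒪)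
    (hAB : (A : X → L) ≤ (B : X → L)) : u.toFun A ≤ u.toFun B := by
  have h : (A : X → L) ⊓ (B : X → L) ∈ 𝒪 := by
    rw [inf_eq_left.2 hAB]; exact A.2
  have h2 := u.map_inf A B h
  have h3 : (⟨(A : X → L) ⊓ (B : X → L), h⟩ : ↥𝒪) = A := Subtype.ext (inf_eq_left.2 hAB)
  rw [h3] at h2
  rw [h2]
  exact inf_le_right

lemma phi_inf [Order.Frame L] (𝒪 : Set (X → L)) (A B : ↥𝒪)
    (h : (A : X → L) ⊓ (B : X → L) ∈ 𝒪) :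
    phiF 𝒪 ⟨(A : X → L) ⊓ (B : X → L), h⟩ = phiF 𝒪 A ⊓ phiF 𝒪 B := by
  funext u
  exact u.map_inf A B h

lemma const_mem_filtOpens [Order.Frame L] (𝒪 : Set (X → L)) (a : L)
    (h : (fun _ => a : X → L) ∈ 𝒪) :
    (fun _ => a : LFilter 𝒪 → L) ∈ filtOpens 𝒪 := by
  refine ⟨{(⟨fun _ => a, h⟩, a)}, ?_⟩
  funext u
  simp only [Set.mem_singleton_iff, iSup_iSup_eq_left]
  exact (inf_eq_right.2 (u.const_le a h)).symm

/-- `μ_X(α)(A) = α(φ(A))`. -/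
def muF [Order.Frame L] (𝒪 : Set (X → L)) (α : LFilter (filtOpens 𝒪)) : LFilter 𝒪 where
  toFun A := α.toFun ⟨phiF 𝒪 A, phi_mem 𝒪 A⟩
  map_inf A B h := by
    have h' : phiF 𝒪 A ⊓ phiF 𝒪 B ∈ filtOpens 𝒪 := phi_inf 𝒪 A B h ▸ phi_mem 𝒪 ⟨_, h⟩
    have h2 := α.map_inf ⟨phiF 𝒪 A, phi_mem 𝒪 A⟩ ⟨phiF 𝒪 B, phi_mem 𝒪 B⟩ h'
    have h3 : (⟨phiF 𝒪 ⟨(A : X → L) ⊓ (B : X → L), h⟩, phi_mem 𝒪 ⟨_, h⟩⟩ :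
        ↥(filtOpens 𝒪)) = ⟨phiF 𝒪 A ⊓ phiF 𝒪 B, h'⟩ := Subtype.ext (phi_inf 𝒪 A B h)
    show α.toFun ⟨phiF 𝒪 ⟨(A : X → L) ⊓ (B : X → L), h⟩, phi_mem 𝒪 ⟨_, h⟩⟩ =
      α.toFun ⟨phiF 𝒪 A, phi_mem 𝒪 A⟩ ⊓ α.toFun ⟨phiF 𝒪 B, phi_mem 𝒪 B⟩
    rw [h3]
    exact h2
  const_le a h := by
    have h1 : (fun _ => a : LFilter 𝒪 → L) ∈ filtOpens 𝒪 := const_mem_filtOpens 𝒪 a h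
    have h2 : (fun _ => a : LFilter 𝒪 → L) ≤ phiF 𝒪 ⟨fun _ => a, h⟩ :=
      fun u => u.const_le a h
    exact le_trans (α.const_le a h1) (α.mono ⟨_, h1⟩ ⟨_, phi_mem 𝒪 ⟨_, h⟩⟩ h2)

lemma filtMap_continuous [Order.Frame L] (𝒪X : Set (X → L)) (𝒪Y : Set (Y → L)) (f : X → Y)
    (hf : ∀ B : ↥𝒪Y, (B : Y → L) ∘ f ∈ 𝒪X) :
    ∀ W ∈ filtOpens 𝒪Y, (W ∘ filtMap 𝒪X 𝒪Y f hf) ∈ filtOpens 𝒪X := by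
  rintro W ⟨S, rfl⟩
  refine ⟨(fun p : ↥𝒪Y × L => ((⟨(p.1 : Y → L) ∘ f, hf p.1⟩ : ↥𝒪X), p.2)) '' S, ?_⟩
  funext u
  rw [iSup_image]
  rfl

lemma muF_continuous [Order.Frame L] (𝒪 : Set (X → L)) :
    ∀ W ∈ filtOpens 𝒪, (W ∘ muF 𝒪) ∈ filtOpens (filtOpens 𝒪) := by
  rintro W ⟨S, rfl⟩
  refine ⟨(fun p : ↥𝒪 × L =>
    ((⟨phiF 𝒪 p.1, phi_mem 𝒪 p.1⟩ : ↥(filtOpens 𝒪)), p.2)) '' S, ?_⟩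
  funext α
  rw [iSup_image]
  rfl

lemma ptFilter_continuous [Order.Frame L] (𝒪 : Set (X → L)) (h𝒪 : IsLTopology 𝒪) :
    ∀ W ∈ filtOpens 𝒪, (W ∘ ptFilter 𝒪) ∈ 𝒪 := by
  rintro W ⟨S, rfl⟩
  have key : ((fun u : LFilter 𝒪 => ⨆ p ∈ S, u.toFun p.1 ⊓ p.2) ∘ ptFilter 𝒪) =
      sSup ((fun p : ↥𝒪 × L => (p.1 : X → L) ⊓ fun _ => p.2) '' S) := by
    funext x
    rw [sSup_image', iSup_apply]
    exact (iSup_subtype'' S fun p : ↥𝒪 × L =>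
      ((p.1 : X → L) ⊓ fun _ => p.2 : X → L) x).symm
  rw [key]
  apply h𝒪.sSup_mem
  rintro g ⟨p, _, rfl⟩
  exact h𝒪.inf_mem _ _ p.1.2 (h𝒪.const_mem p.2)

/-- An `L`-order as a binary `L`-relation with the order axioms. -/
structure IsLOrder [Order.Frame L] (e : X → X → L) : Prop where
  refl : ∀ x, e x x = ⊤
  trans : ∀ x y z, e x y ⊓ e y z ≤ e x z
  antisymm : ∀ x y, e x y = ⊤ → e y x = ⊤ → x = y

/-- `s` is a supremum of the `L`-subset `A`. -/
def IsSupE [Order.Frame L] (e : X → X → L) (A : X → L) (s : X) : Prop :=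
  ∀ y, e s y = ⨅ z, A z ⇨ e z y

/-- `i` is an infimum of the `L`-subset `A`. -/
def IsInfE [Order.Frame L] (e : X → X → L) (A : X → L) (i : X) : Prop :=
  ∀ y, e y i = ⨅ z, A z ⇨ e y z

/-- Completeness: every `L`-subset has a supremum. -/
def CompleteE [Order.Frame L] (e : X → X → L) : Prop := ∀ A : X → L, ∃ s, IsSupE e A s

/-- Directedness of an `L`-subset. -/
def DirectedE [Order.Frame L] (e : X → X → L) (D : X → L) : Prop :=
  (⨆ x, D x) = ⊤ ∧ ∀ x y, D x ⊓ D y ≤ ⨆ z, D z ⊓ e x z ⊓ e y z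

/-- An ideal: a directed lower set. -/
def IsIdealE [Order.Frame L] (e : X → X → L) (I : X → L) : Prop :=
  DirectedE e I ∧ ∀ x y, I x ⊓ e y x ≤ I y

/-- `↑x(y) = e(x,y)`. -/
def upE [Order.Frame L] (e : X → X → L) (x : X) : X → L := fun y => e x y

/-- `⇓x(y) = ⨅_{I ideal} (e(x, ⊔I) ⇨ I(y))`. -/
def wbelowE [Order.Frame L] (e : X → X → L) (x y : X) : L :=
  ⨅ I : X → L, ⨅ _ : IsIdealE e I, ⨅ s : X, ⨅ _ : IsSupE e I s, e x s ⇨ I y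

/-- Scott open `L`-subsets. -/
def ScottOpenE [Order.Frame L] (e : X → X → L) (A : X → L) : Prop :=
  (∀ x y, A x ⊓ e x y ≤ A y) ∧
  ∀ D : X → L, DirectedE e D → ∀ s, IsSupE e D s → A s ≤ ⨆ x, A x ⊓ D x

/-- The `L`-Scott topology. -/
def scottOpens [Order.Frame L] (e : X → X → L) : Set (X → L) := { A | ScottOpenE e A }

/-- `u^l(x) = ⨆_{A ∈ σ_L(X)} u(A) ⊓ sub(A, ↑x)`. -/
def lowerOf [Order.Frame L] (e : X → X → L) (u : LFilter (scottOpens e)) : X → L :=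
  fun x => ⨆ A : ↥(scottOpens e), u.toFun A ⊓ subL (A : X → L) (upE e x)

/-- The specialization `L`-order `e(x,y) = ⨅_{A ∈ 𝒪} (A x ⇨ A y)`. -/
def specE [Order.Frame L] (𝒪 : Set (X → L)) (x y : X) : L :=
  ⨅ A : ↥𝒪, (A : X → L) x ⇨ (A : X → L) y

/-- `sub(u,v) = ⨅_{A ∈ 𝒪} (u A ⇨ v A)` for open filters. -/
def subF [Order.Frame L] {𝒪 : Set (X → L)} (u v : LFilter 𝒪) : L :=
  ⨅ A : ↥𝒪, u.toFun A ⇨ v.toFun A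

/-! The constant L-subset with value `sub(A,B)` is open, and `A ⊓ sub(A,B)_X ≤ B`; since `u`
preserves binary meets and dominates constants, `u(A) ⊓ sub(A,B) ≤ u(B)`. Taking `A = B`, where
`sub(B,B) = ⊤`, turns both inequalities into the two equalities. -/

lemma subL_self [Order.Frame L] (A : X → L) : subL A A = ⊤ := by
  simp [subL]

lemma inf_const_subL_le [Order.Frame L] (A B : X → L) : A ⊓ (fun _ => subL A B) ≤ B :=
  fun x => le_himp_iff'.1 (iInf_le (fun x => A x ⇨ B x) x)

lemma LFilter.toFun_inf_subL_le [Order.Frame L] {𝒪 : Set (X → L)} (h𝒪 : IsLTopology 𝒪)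
    (u : LFilter 𝒪) (A B : ↥𝒪) :
    u.toFun A ⊓ subL (A : X → L) (B : X → L) ≤ u.toFun B := by
  set s := subL (A : X → L) (B : X → L)
  have hs : (fun _ => s : X → L) ∈ 𝒪 := h𝒪.const_mem s
  have hAs : (A : X → L) ⊓ (fun _ => s) ∈ 𝒪 := h𝒪.inf_mem _ _ A.2 hs
  calc u.toFun A ⊓ s
      ≤ u.toFun A ⊓ u.toFun ⟨fun _ => s, hs⟩ := inf_le_inf_left _ (u.const_le s hs)
    _ = u.toFun ⟨(A : X → L) ⊓ (fun _ => s), hAs⟩ := (u.map_inf A ⟨_, hs⟩ hAs).symm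
    _ ≤ u.toFun B := u.mono _ _ (inf_const_subL_le _ _)

/-- For an `L`-valued topological space `(X, 𝒪)` and an open filter `u`,
for every `B ∈ 𝒪`:
`u(B) = ⨆_{A ∈ 𝒪} u(A) ⊓ sub(A,B)` and `u(B) = ⨅_{A ∈ 𝒪} (sub(B,A) ⇨ u(A))`. -/
theorem stmt0 [Order.Frame L] (𝒪 : Set (X → L)) (h𝒪 : IsLTopology 𝒪)
    (u : LFilter 𝒪) (B : ↥𝒪) :
    u.toFun B = (⨆ A : ↥𝒪, u.toFun A ⊓ subL (A : X → L) (B : X → L)) ∧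
    u.toFun B = (⨅ A : ↥𝒪, subL (B : X → L) (A : X → L) ⇨ u.toFun A) := by
  constructor
  · refine le_antisymm (le_iSup_of_le B ?_) (iSup_le fun A => u.toFun_inf_subL_le h𝒪 A B)
    rw [subL_self, inf_top_eq]
  · refine le_antisymm (le_iInf fun A => le_himp_iff.2 (u.toFun_inf_subL_le h𝒪 B A))
      (iInf_le_of_le B ?_)
    rw [subL_self, top_himp]
end

section
/- Let (X,𝒪) be an L-valued topological space and let α be an open filter of the space Φ_L(X) (i.e. α ∈ Φ²_L(X)). Then μ_X(α), defined by μ_X(α)(A) = α(φ(A)) for A ∈ 𝒪, is an open filter of X. -/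
variable {L : Type*} {X : Type*} {Y : Type*}

theorem stmt5_general [Order.Frame L] (𝒪 : Set (X → L)) (α : LFilter (filtOpens 𝒪)) :
    (∀ (A B : ↥𝒪) (h : (A : X → L) ⊓ (B : X → L) ∈ 𝒪),
      α.toFun ⟨phiF 𝒪 ⟨(A : X → L) ⊓ (B : X → L), h⟩, phi_mem 𝒪 ⟨_, h⟩⟩ =
        α.toFun ⟨phiF 𝒪 A, phi_mem 𝒪 A⟩ ⊓ α.toFun ⟨phiF 𝒪 B, phi_mem 𝒪 B⟩) ∧
    ∀ (a : L) (h : (fun _ => a : X → L) ∈ 𝒪),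
      a ≤ α.toFun ⟨phiF 𝒪 ⟨fun _ => a, h⟩, phi_mem 𝒪 ⟨_, h⟩⟩ :=
  ⟨(muF 𝒪 α).map_inf, (muF 𝒪 α).const_le⟩

/-- For every open filter `α` of the space `Φ_L(X)`, the map
`μ_X(α) : A ↦ α(φ(A))` is an open filter of `X`. -/
theorem stmt5 [Order.Frame L] (𝒪 : Set (X → L)) (h𝒪 : IsLTopology 𝒪)
    (α : LFilter (filtOpens 𝒪)) :
    (∀ (A B : ↥𝒪) (h : (A : X → L) ⊓ (B : X → L) ∈ 𝒪),
      α.toFun ⟨phiF 𝒪 ⟨(A : X → L) ⊓ (B : X → L), h⟩, phi_mem 𝒪 ⟨_, h⟩⟩ =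
        α.toFun ⟨phiF 𝒪 A, phi_mem 𝒪 A⟩ ⊓ α.toFun ⟨phiF 𝒪 B, phi_mem 𝒪 B⟩) ∧
    ∀ (a : L) (h : (fun _ => a : X → L) ∈ 𝒪),
      a ≤ α.toFun ⟨phiF 𝒪 ⟨fun _ => a, h⟩, phi_mem 𝒪 ⟨_, h⟩⟩ :=
  stmt5_general 𝒪 α
end

section
/- Let (X,𝒪(X)) and (Y,𝒪(Y)) be L-valued topological spaces. Then (1) for every A ∈ 𝒪(X), (μ_X)⁻(φ(A)) = φ(φ(A)), so that μ_X : Φ²_L(X) → Φ_L(X) is continuous; and (2) for every continuous map f : X → Y, μ_Y ∘ (Φ²_L f) = (Φ_L f) ∘ μ_X (naturality of μ). -/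
variable {L : Type*} {X : Type*} {Y : Type*}

/-! Both sides of the naturality square send `α` to `B ↦ α(φ(f⁻ B))`: the only input is that
`Φ_L f` pulls the basic open `φ(B)` back to `φ(f⁻ B)`, while `μ_X` pulls `φ(A)` back to
`φ(φ(A))` by its very definition. -/

theorem LFilter.ext [Order.Frame L] {𝒪 : Set (X → L)} {u v : LFilter 𝒪}
    (h : u.toFun = v.toFun) : u = v := by
  cases u
  cases v
  cases h
  rfl

theorem phiF_comp_muF [Order.Frame L] (𝒪 : Set (X → L)) (A : ↥𝒪) :
    phiF 𝒪 A ∘ muF 𝒪 = phiF (filtOpens 𝒪) ⟨phiF 𝒪 A, phi_mem 𝒪 A⟩ :=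
  rfl

theorem phiF_comp_filtMap [Order.Frame L] (𝒪X : Set (X → L)) (𝒪Y : Set (Y → L)) (f : X → Y)
    (hf : ∀ B : ↥𝒪Y, (B : Y → L) ∘ f ∈ 𝒪X) (B : ↥𝒪Y) :
    phiF 𝒪Y B ∘ filtMap 𝒪X 𝒪Y f hf = phiF 𝒪X ⟨(B : Y → L) ∘ f, hf B⟩ :=
  rfl

theorem muF_filtMap_filtMap [Order.Frame L] (𝒪X : Set (X → L)) (𝒪Y : Set (Y → L))
    (f : X → Y) (hf : ∀ B : ↥𝒪Y, (B : Y → L) ∘ f ∈ 𝒪X) (α : LFilter (filtOpens 𝒪X)) :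
    muF 𝒪Y (filtMap (filtOpens 𝒪X) (filtOpens 𝒪Y) (filtMap 𝒪X 𝒪Y f hf)
        (fun W => filtMap_continuous 𝒪X 𝒪Y f hf W.1 W.2) α) =
      filtMap 𝒪X 𝒪Y f hf (muF 𝒪X α) := by
  refine LFilter.ext (funext fun B => ?_)
  exact congrArg α.toFun (Subtype.ext (phiF_comp_filtMap 𝒪X 𝒪Y f hf B))

theorem stmt6_general [Order.Frame L] (𝒪X : Set (X → L)) (𝒪Y : Set (Y → L)) :
    ((∀ A : ↥𝒪X, (phiF 𝒪X A) ∘ (muF 𝒪X) =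
        phiF (filtOpens 𝒪X) ⟨phiF 𝒪X A, phi_mem 𝒪X A⟩) ∧
      ∀ W ∈ filtOpens 𝒪X, (W ∘ muF 𝒪X) ∈ filtOpens (filtOpens 𝒪X)) ∧
    ∀ (f : X → Y) (hf : ∀ B : ↥𝒪Y, (B : Y → L) ∘ f ∈ 𝒪X)
      (α : LFilter (filtOpens 𝒪X)),
      muF 𝒪Y (filtMap (filtOpens 𝒪X) (filtOpens 𝒪Y) (filtMap 𝒪X 𝒪Y f hf)
        (fun W => filtMap_continuous 𝒪X 𝒪Y f hf W.1 W.2) α) =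
      filtMap 𝒪X 𝒪Y f hf (muF 𝒪X α) :=
  ⟨⟨phiF_comp_muF 𝒪X, muF_continuous 𝒪X⟩, muF_filtMap_filtMap 𝒪X 𝒪Y⟩

/-- (1) `(μ_X)⁻(φ(A)) = φ(φ(A))` for every `A ∈ 𝒪(X)`, so `μ_X` is
continuous; (2) for every continuous `f : X → Y`, `μ_Y ∘ Φ²_L f = Φ_L f ∘ μ_X`. -/
theorem stmt6 [Order.Frame L] (𝒪X : Set (X → L)) (𝒪Y : Set (Y → L))
    (hX : IsLTopology 𝒪X) (hY : IsLTopology 𝒪Y) :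
    ((∀ A : ↥𝒪X, (phiF 𝒪X A) ∘ (muF 𝒪X) =
        phiF (filtOpens 𝒪X) ⟨phiF 𝒪X A, phi_mem 𝒪X A⟩) ∧
      ∀ W ∈ filtOpens 𝒪X, (W ∘ muF 𝒪X) ∈ filtOpens (filtOpens 𝒪X)) ∧
    ∀ (f : X → Y) (hf : ∀ B : ↥𝒪Y, (B : Y → L) ∘ f ∈ 𝒪X)
      (α : LFilter (filtOpens 𝒪X)),
      muF 𝒪Y (filtMap (filtOpens 𝒪X) (filtOpens 𝒪Y) (filtMap 𝒪X 𝒪Y f hf)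
        (fun W => filtMap_continuous 𝒪X 𝒪Y f hf W.1 W.2) α) =
      filtMap 𝒪X 𝒪Y f hf (muF 𝒪X α) :=
  stmt6_general 𝒪X 𝒪Y
end

section
/- For every T0 L-valued topological space (X,𝒪), the monad laws hold: μ_X ∘ Φ_L(μ_X) = μ_X ∘ μ_{Φ_L(X)} as maps Φ³_L(X) → Φ_L(X), and μ_X ∘ η_{Φ_L(X)} = id_{Φ_L(X)} = μ_X ∘ Φ_L(η_X). Hence (Φ_L, η, μ) is a monad over the category of T0 L-valued topological spaces. -/
/-! All three monad laws hold definitionally. Evaluated at an open set `A`, both sides of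
associativity reduce to `Ξ(φ(φ A))`, since `φ(A) ∘ μ = φ(φ A)`; the unit laws reduce to
`φ(A)(u) = u(A)` and `φ(A) ∘ η = A`. Two open sets with equal underlying `L`-subsets are
equal as subtypes by proof irrelevance. -/

variable {L : Type*} {X : Type*} {Y : Type*}

theorem muF_filtMap_muF [Order.Frame L] (𝒪 : Set (X → L))
    (Ξ : LFilter (filtOpens (filtOpens 𝒪))) :
    muF 𝒪 (filtMap (filtOpens (filtOpens 𝒪)) (filtOpens 𝒪) (muF 𝒪)
      (fun W => muF_continuous 𝒪 W.1 W.2) Ξ) = muF 𝒪 (muF (filtOpens 𝒪) Ξ) :=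
  rfl

theorem muF_ptFilter [Order.Frame L] (𝒪 : Set (X → L)) (u : LFilter 𝒪) :
    muF 𝒪 (ptFilter (filtOpens 𝒪) u) = u :=
  rfl

theorem muF_filtMap_ptFilter [Order.Frame L] (𝒪 : Set (X → L)) (h𝒪 : IsLTopology 𝒪)
    (u : LFilter 𝒪) :
    muF 𝒪 (filtMap 𝒪 (filtOpens 𝒪) (ptFilter 𝒪)
      (fun W => ptFilter_continuous 𝒪 h𝒪 W.1 W.2) u) = u :=
  rfl

theorem stmt7_general [Order.Frame L] (𝒪 : Set (X → L)) (h𝒪 : IsLTopology 𝒪) :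
    (∀ Ξ : LFilter (filtOpens (filtOpens 𝒪)),
      muF 𝒪 (filtMap (filtOpens (filtOpens 𝒪)) (filtOpens 𝒪) (muF 𝒪)
        (fun W => muF_continuous 𝒪 W.1 W.2) Ξ) =
      muF 𝒪 (muF (filtOpens 𝒪) Ξ)) ∧
    (∀ u : LFilter 𝒪, muF 𝒪 (ptFilter (filtOpens 𝒪) u) = u) ∧
    ∀ u : LFilter 𝒪,
      muF 𝒪 (filtMap 𝒪 (filtOpens 𝒪) (ptFilter 𝒪)
        (fun W => ptFilter_continuous 𝒪 h𝒪 W.1 W.2) u) = u :=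
  ⟨muF_filtMap_muF 𝒪, muF_ptFilter 𝒪, muF_filtMap_ptFilter 𝒪 h𝒪⟩

/-- For every `T0` `L`-valued topological space `(X, 𝒪)`, the monad laws
hold: `μ_X ∘ Φ_L(μ_X) = μ_X ∘ μ_{Φ_L(X)}` and
`μ_X ∘ η_{Φ_L(X)} = id = μ_X ∘ Φ_L(η_X)`; hence `(Φ_L, η, μ)` is a monad. -/
theorem stmt7 [Order.Frame L] (𝒪 : Set (X → L)) (h𝒪 : IsLTopology 𝒪)
    (hT0 : ∀ x y : X, (∀ A ∈ 𝒪, A x = A y) → x = y) :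
    (∀ Ξ : LFilter (filtOpens (filtOpens 𝒪)),
      muF 𝒪 (filtMap (filtOpens (filtOpens 𝒪)) (filtOpens 𝒪) (muF 𝒪)
        (fun W => muF_continuous 𝒪 W.1 W.2) Ξ) =
      muF 𝒪 (muF (filtOpens 𝒪) Ξ)) ∧
    (∀ u : LFilter 𝒪, muF 𝒪 (ptFilter (filtOpens 𝒪) u) = u) ∧
    ∀ u : LFilter 𝒪,
      muF 𝒪 (filtMap 𝒪 (filtOpens 𝒪) (ptFilter 𝒪)
        (fun W => ptFilter_continuous 𝒪 h𝒪 W.1 W.2) u) = u :=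
  stmt7_general 𝒪 h𝒪
end

section
/- Let (X,e) be a complete L-ordered set equipped with its L-Scott topology σ_L(X), and let u be an open filter of (X, σ_L(X)). Then the L-subset u^l, defined by u^l(x) = ⨆_{A ∈ σ_L(X)} u(A) ⊓ sub(A, ↑x), is an ideal of (X,e). -/
variable {L : Type*} {X : Type*} {Y : Type*}

/-!
In a complete `L`-ordered set every `L`-subset `C` has an infimum `i`, characterised by
`e(x, i) = sub(C, ↑x)`; in particular `sub(C, ↑i) = 1`, so `u(C) ≤ u^l(i)` whenever `C` is
Scott open. Scott open sets contain the constants and are closed under binary meets, which `u`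
preserves. Taking `C = 1_X` gives `⨆ u^l = 1`, and for two terms `u(A) ⊓ sub(A, ↑x)` and
`u(B) ⊓ sub(B, ↑y)` the infimum of `A ⊓ B` is a common upper bound of `x` and `y` in `u^l`.
That `u^l` is a lower set is transitivity of `e`.
-/

section

variable [Order.Frame L] {e : X → X → L}

lemma IsLOrder.eq_iInf_himp (hord : IsLOrder e) (a b : X) : e a b = ⨅ w, e b w ⇨ e a w :=
  le_antisymm (le_iInf fun w => le_himp_iff.2 (hord.trans a b w))
    ((iInf_le _ b).trans (by rw [hord.refl b, top_himp]))

lemma IsSupE.le_e (hord : IsLOrder e) {D : X → L} {s : X} (hs : IsSupE e D s) (y : X) :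
    D y ≤ e y s := by
  rw [hord.eq_iInf_himp y s]
  exact le_iInf fun w => le_himp_comm.1 ((hs w).le.trans (iInf_le _ y))

/-- The infimum of `A` is the supremum of its lower bounds. -/
lemma IsLOrder.exists_isInfE (hord : IsLOrder e) (hc : CompleteE e) (A : X → L) :
    ∃ i, IsInfE e A i := by
  obtain ⟨s, hs⟩ := hc fun z => ⨅ w, A w ⇨ e z w
  have hA_le : ∀ z, A z ≤ e s z := fun z => by
    rw [hs z]
    exact le_iInf fun y => le_himp_comm.1 (iInf_le _ z)
  refine ⟨s, fun y => le_antisymm ?_ (hs.le_e hord y)⟩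
  exact le_iInf fun z => le_himp_iff.2 ((inf_le_inf_left _ (hA_le z)).trans (hord.trans y s z))

lemma IsInfE.subL_upE {C : X → L} {i : X} (hi : IsInfE e C i) (x : X) :
    subL C (upE e x) = e x i :=
  (hi x).symm

lemma subL_anti_left {A A' B : X → L} (h : A' ≤ A) : subL A B ≤ subL A' B :=
  iInf_mono fun x => himp_le_himp_right (h x)

lemma subL_upE_inf_le (hord : IsLOrder e) (A : X → L) (x y : X) :
    subL A (upE e x) ⊓ e y x ≤ subL A (upE e y) := by
  refine le_iInf fun z => le_himp_iff.2 ?_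
  calc subL A (upE e x) ⊓ e y x ⊓ A z ≤ e y x ⊓ ((A z ⇨ e x z) ⊓ A z) :=
        le_inf (inf_le_left.trans inf_le_right)
          (inf_le_inf_right _ (inf_le_left.trans (iInf_le _ z)))
    _ ≤ e y x ⊓ e x z := inf_le_inf_left _ himp_inf_le
    _ ≤ e y z := hord.trans y x z

lemma scottOpens_const (a : L) : (fun _ => a : X → L) ∈ scottOpens e :=
  ⟨fun _ _ => inf_le_left, fun D hD _ _ => by rw [← inf_iSup_eq, hD.1, inf_top_eq]⟩

lemma iSup_inf_iSup_le_of_directed {A B D : X → L} (hA : ∀ x y, A x ⊓ e x y ≤ A y)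
    (hB : ∀ x y, B x ⊓ e x y ≤ B y) (hD : ∀ x y, D x ⊓ D y ≤ ⨆ z, D z ⊓ e x z ⊓ e y z) :
    (⨆ w, A w ⊓ D w) ⊓ (⨆ w, B w ⊓ D w) ≤ ⨆ z, (A ⊓ B) z ⊓ D z := by
  rw [iSup_inf_eq]
  refine iSup_le fun w => ?_
  rw [inf_iSup_eq]
  refine iSup_le fun w' => ?_
  calc A w ⊓ D w ⊓ (B w' ⊓ D w') = A w ⊓ B w' ⊓ (D w ⊓ D w') := inf_inf_inf_comm _ _ _ _
    _ ≤ A w ⊓ B w' ⊓ ⨆ z, D z ⊓ e w z ⊓ e w' z := inf_le_inf_left _ (hD w w')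
    _ = ⨆ z, (A w ⊓ e w z) ⊓ (B w' ⊓ e w' z) ⊓ D z := by
        rw [inf_iSup_eq]
        congr 1 with z
        ac_rfl
    _ ≤ ⨆ z, (A ⊓ B) z ⊓ D z :=
        iSup_mono fun z => inf_le_inf_right _ (inf_le_inf (hA w z) (hB w' z))

lemma scottOpens_inf {A B : X → L} (hA : A ∈ scottOpens e) (hB : B ∈ scottOpens e) :
    A ⊓ B ∈ scottOpens e := by
  refine ⟨fun x y => ?_, fun D hD s hs => ?_⟩
  · rw [Pi.inf_apply, Pi.inf_apply, inf_inf_distrib_right]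
    exact inf_le_inf (hA.1 x y) (hB.1 x y)
  · exact (inf_le_inf (hA.2 D hD s hs) (hB.2 D hD s hs)).trans
      (iSup_inf_iSup_le_of_directed hA.1 hB.1 hD.2)

lemma le_lowerOf_of_isInfE (hord : IsLOrder e) (u : LFilter (scottOpens e)) {C : X → L}
    (hC : C ∈ scottOpens e) {i : X} (hi : IsInfE e C i) : u.toFun ⟨C, hC⟩ ≤ lowerOf e u i :=
  le_iSup_of_le ⟨C, hC⟩ (by rw [hi.subL_upE, hord.refl, inf_top_eq])

lemma iSup_lowerOf_eq_top (hord : IsLOrder e) (hc : CompleteE e) (u : LFilter (scottOpens e)) :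
    ⨆ x, lowerOf e u x = ⊤ := by
  obtain ⟨i, hi⟩ := hord.exists_isInfE hc fun _ => ⊤
  have htop : (fun _ => ⊤ : X → L) ∈ scottOpens e := scottOpens_const ⊤
  exact top_unique <|
    (u.const_le ⊤ htop).trans ((le_lowerOf_of_isInfE hord u htop hi).trans (le_iSup _ i))

lemma lowerOf_inf_le (hord : IsLOrder e) (hc : CompleteE e) (u : LFilter (scottOpens e))
    (x y : X) : lowerOf e u x ⊓ lowerOf e u y ≤ ⨆ z, lowerOf e u z ⊓ e x z ⊓ e y z := by
  rw [lowerOf, iSup_inf_eq]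
  refine iSup_le fun A => ?_
  rw [lowerOf, inf_iSup_eq]
  refine iSup_le fun B => ?_
  have hAB : (A : X → L) ⊓ B ∈ scottOpens e := scottOpens_inf A.2 B.2
  obtain ⟨i, hi⟩ := hord.exists_isInfE hc ((A : X → L) ⊓ B)
  refine le_iSup_of_le i (le_inf (le_inf ?_ ?_) ?_)
  · calc u.toFun A ⊓ subL A (upE e x) ⊓ (u.toFun B ⊓ subL B (upE e y))
        ≤ u.toFun A ⊓ u.toFun B := inf_le_inf inf_le_left inf_le_left
      _ = u.toFun ⟨_, hAB⟩ := (u.map_inf A B hAB).symm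
      _ ≤ lowerOf e u i := le_lowerOf_of_isInfE hord u hAB hi
  · rw [← hi.subL_upE]
    exact inf_le_left.trans (inf_le_right.trans (subL_anti_left inf_le_left))
  · rw [← hi.subL_upE]
    exact inf_le_right.trans (inf_le_right.trans (subL_anti_left inf_le_right))

lemma lowerOf_inf_e_le (hord : IsLOrder e) (u : LFilter (scottOpens e)) (x y : X) :
    lowerOf e u x ⊓ e y x ≤ lowerOf e u y := by
  rw [lowerOf, iSup_inf_eq]
  exact iSup_mono fun A =>
    (inf_assoc _ _ _).le.trans (inf_le_inf_left _ (subL_upE_inf_le hord A x y))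

end

/-- For a complete `L`-ordered set `(X, e)` and an open filter `u` of the
`L`-Scott topology, `u^l` is an ideal of `(X, e)`. -/
theorem stmt9 [Order.Frame L] (e : X → X → L) (hord : IsLOrder e) (hc : CompleteE e)
    (u : LFilter (scottOpens e)) :
    IsIdealE e (lowerOf e u) :=
  ⟨⟨iSup_lowerOf_eq_top hord hc u, lowerOf_inf_le hord hc u⟩, lowerOf_inf_e_le hord u⟩
end

section
/- A complete L-ordered set (X,e) is an L-continuous lattice if and only if x = ⊔([x]^l) holds for every x ∈ X, where [x]^l(y) = ⨆_{A ∈ σ_L(X)} A(x) ⊓ sub(A, ↑y). -/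
/-!
Every Scott open `A` satisfies `A x ⊓ sub(A, ↑y) ≤ ⇓x(y)`: given an ideal `I` with
`e(x, ⊔I)`, Scott openness moves `A x` to some `A w ⊓ I w`, and `sub(A, ↑y)` turns `A w` into
`e(y, w)`, so `I y` by lowerness. Hence `[x]^l ≤ ⇓x ≤ ↓x` always, and `x = ⊔[x]^l` forces
`x = ⊔⇓x`. Conversely, in an `L`-continuous lattice `w ↦ ⇓w(z)` is Scott open: for directed `D`
with supremum `s`, the ideal `⨆_d D(d) ⊓ ⇓d` also has supremum `s`, which bounds `⇓s(z)`.
Since `⇓w(z) ≤ e(z, w)`, this open set has `sub = ⊤` against `↑z`, so `⇓x ≤ [x]^l`.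
-/

variable {L : Type*} {X : Type*} {Y : Type*}

section

variable [Order.Frame L] {e : X → X → L}

theorem isSupE_down (hord : IsLOrder e) (x : X) : IsSupE e (fun z => e z x) x := by
  intro y
  apply le_antisymm
  · exact le_iInf fun z => le_himp_iff'.2 (hord.trans z x y)
  · refine (iInf_le _ x).trans ?_
    simp only [hord.refl x, top_himp, le_rfl]

theorem isIdealE_down (hord : IsLOrder e) (x : X) : IsIdealE e (fun z => e z x) := by
  refine ⟨⟨top_le_iff.1 ((hord.refl x).ge.trans (le_iSup (fun z => e z x) x)), fun a b => ?_⟩,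
    fun a b => ?_⟩
  · refine le_trans ?_ (le_iSup (fun z => e z x ⊓ e a z ⊓ e b z) x)
    rw [hord.refl, top_inf_eq]
  · rw [inf_comm]
    exact hord.trans b a x

theorem IsSupE.of_le_of_le_down {A B : X → L} {x : X} (hord : IsLOrder e) (hA : IsSupE e A x)
    (hAB : A ≤ B) (hB : ∀ z, B z ≤ e z x) : IsSupE e B x := by
  intro y
  apply le_antisymm
  · exact le_iInf fun z => le_himp_iff'.2 ((inf_le_inf_right _ (hB z)).trans (hord.trans z x y))
  · rw [hA y]
    exact iInf_mono fun z => himp_le_himp_right (hAB z)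

theorem isSupE_iSup_inf {D : X → L} {F : X → X → L} {s : X} (hD : IsSupE e D s)
    (hF : ∀ d, IsSupE e (F d) d) : IsSupE e (fun w => ⨆ d, D d ⊓ F d w) s := by
  intro u
  calc e s u = ⨅ d, D d ⇨ ⨅ w, F d w ⇨ e w u := by
        rw [hD u]; exact iInf_congr fun d => by rw [← hF d u]
    _ = ⨅ w, (⨆ d, D d ⊓ F d w) ⇨ e w u := by
        simp only [himp_iInf_eq, himp_himp, iSup_himp_eq]
        exact iInf_comm

theorem DirectedE.iSup_inf {D : X → L} {F : X → X → L} (hD : DirectedE e D)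
    (hF : ∀ d, DirectedE e (F d)) (hmono : ∀ d d' w, F d w ⊓ e d d' ≤ F d' w) :
    DirectedE e (fun w => ⨆ d, D d ⊓ F d w) := by
  refine ⟨?_, fun a b => ?_⟩
  · rw [iSup_comm]
    simp only [← inf_iSup_eq, (hF _).1, inf_top_eq, hD.1]
  have hbound : ∀ c, D c ⊓ F c a ⊓ F c b ≤ ⨆ w, (⨆ d, D d ⊓ F d w) ⊓ e a w ⊓ e b w := by
    intro c
    rw [inf_assoc]
    refine (inf_le_inf_left _ ((hF c).2 a b)).trans ?_
    rw [inf_iSup_eq]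
    refine iSup_mono fun w => ?_
    rw [← inf_assoc, ← inf_assoc]
    exact inf_le_inf_right _ (inf_le_inf_right _ (le_iSup (fun d => D d ⊓ F d w) c))
  rw [iSup_inf_eq]
  refine iSup_le fun d => ?_
  rw [inf_iSup_eq]
  refine iSup_le fun d' => ?_
  calc D d ⊓ F d a ⊓ (D d' ⊓ F d' b) = D d ⊓ D d' ⊓ (F d a ⊓ F d' b) := inf_inf_inf_comm ..
    _ ≤ (⨆ c, D c ⊓ e d c ⊓ e d' c) ⊓ (F d a ⊓ F d' b) := inf_le_inf_right _ (hD.2 d d')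
    _ = ⨆ c, D c ⊓ e d c ⊓ e d' c ⊓ (F d a ⊓ F d' b) := iSup_inf_eq ..
    _ ≤ ⨆ c, D c ⊓ F c a ⊓ F c b := iSup_mono fun c => by
        refine le_inf (le_inf (inf_le_left.trans (inf_le_left.trans inf_le_left)) ?_) ?_
        · exact (le_inf (inf_le_right.trans inf_le_left)
            (inf_le_left.trans (inf_le_left.trans inf_le_right))).trans (hmono d c a)
        · exact (le_inf (inf_le_right.trans inf_le_right)
            (inf_le_left.trans inf_le_right)).trans (hmono d' c b)
    _ ≤ _ := iSup_le hbound

theorem IsIdealE.iSup_inf {D : X → L} {F : X → X → L} (hD : DirectedE e D)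
    (hF : ∀ d, IsIdealE e (F d)) (hmono : ∀ d d' w, F d w ⊓ e d d' ≤ F d' w) :
    IsIdealE e (fun w => ⨆ d, D d ⊓ F d w) := by
  refine ⟨hD.iSup_inf (fun d => (hF d).1) hmono, fun a b => ?_⟩
  rw [iSup_inf_eq]
  refine iSup_mono fun d => ?_
  rw [inf_assoc]
  exact inf_le_inf_left _ ((hF d).2 a b)

theorem IsIdealE.apply_eq_top_of_bot {I : X → L} (hI : IsIdealE e I) {b : X}
    (hb : ∀ y, e b y = ⊤) : I b = ⊤ := by
  rw [← top_le_iff, ← hI.1.1]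
  refine iSup_le fun y => ?_
  simpa only [hb y, inf_top_eq] using hI.2 y b

theorem IsIdealE.inf_le_of_isJoin {I : X → L} (hI : IsIdealE e I) {a b c : X}
    (hc : ∀ u, e c u = e a u ⊓ e b u) : I a ⊓ I b ≤ I c := by
  refine (hI.1.2 a b).trans (iSup_le fun w => ?_)
  rw [inf_assoc, ← hc w]
  exact hI.2 w c

theorem CompleteE.exists_bot (hc : CompleteE e) : ∃ b : X, ∀ y, e b y = ⊤ := by
  obtain ⟨b, hb⟩ := hc fun _ => ⊥
  exact ⟨b, fun y => by simp [hb y]⟩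

theorem CompleteE.exists_isJoin (hc : CompleteE e) (a b : X) :
    ∃ c : X, ∀ u, e c u = e a u ⊓ e b u := by
  classical
  obtain ⟨c, hcs⟩ := hc fun z => if z = a ∨ z = b then ⊤ else ⊥
  refine ⟨c, fun u => ?_⟩
  rw [hcs u]
  apply le_antisymm
  · exact le_inf ((iInf_le _ a).trans (by simp)) ((iInf_le _ b).trans (by simp))
  · refine le_iInf fun z => ?_
    by_cases h : z = a ∨ z = b
    · rcases h with rfl | rfl <;> simp
    · simp [h]

theorem wbelowE_le_himp {I : X → L} (hI : IsIdealE e I) {s : X} (hs : IsSupE e I s) (x y : X) :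
    wbelowE e x y ≤ e x s ⇨ I y :=
  iInf_le_of_le I (iInf_le_of_le hI (iInf_le_of_le s (iInf_le _ hs)))

theorem wbelowE_le (hord : IsLOrder e) (x y : X) : wbelowE e x y ≤ e y x := by
  simpa only [hord.refl, top_himp] using
    wbelowE_le_himp (isIdealE_down hord x) (isSupE_down hord x) x y

theorem wbelowE_mono_left (hord : IsLOrder e) (x x' y : X) :
    wbelowE e x y ⊓ e x x' ≤ wbelowE e x' y := by
  refine le_iInf fun I => le_iInf fun hI => le_iInf fun s => le_iInf fun hs => le_himp_iff.2 ?_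
  calc wbelowE e x y ⊓ e x x' ⊓ e x' s ≤ (e x s ⇨ I y) ⊓ e x s := by
        rw [inf_assoc]
        exact inf_le_inf (wbelowE_le_himp hI hs x y) (hord.trans x x' s)
    _ ≤ I y := himp_inf_le

theorem wbelowE_anti_right (x y y' : X) :
    wbelowE e x y ⊓ e y' y ≤ wbelowE e x y' := by
  refine le_iInf fun I => le_iInf fun hI => le_iInf fun s => le_iInf fun hs => le_himp_iff.2 ?_
  calc wbelowE e x y ⊓ e y' y ⊓ e x s ≤ ((e x s ⇨ I y) ⊓ e x s) ⊓ e y' y := by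
        rw [inf_right_comm]
        exact inf_le_inf_right _ (inf_le_inf_right _ (wbelowE_le_himp hI hs x y))
    _ ≤ I y ⊓ e y' y := inf_le_inf_right _ himp_inf_le
    _ ≤ I y' := hI.2 y y'

theorem isIdealE_wbelowE (hord : IsLOrder e) (hc : CompleteE e) (x : X) :
    IsIdealE e (wbelowE e x) := by
  obtain ⟨b, hb⟩ := hc.exists_bot
  refine ⟨⟨?_, fun a a' => ?_⟩, fun y y' => wbelowE_anti_right x y y'⟩
  · refine top_le_iff.1 (le_iSup_of_le b
      (le_iInf fun I => le_iInf fun hI => le_iInf fun s => le_iInf fun _ => ?_))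
    rw [hI.apply_eq_top_of_bot hb, himp_top]
  · obtain ⟨c, hjoin⟩ := hc.exists_isJoin a a'
    have hc_top := hjoin c
    rw [hord.refl, eq_comm, inf_eq_top_iff] at hc_top
    refine le_iSup_of_le c ?_
    rw [hc_top.1, hc_top.2, inf_top_eq, inf_top_eq]
    refine le_iInf fun I => le_iInf fun hI => le_iInf fun s => le_iInf fun hs => ?_
    calc wbelowE e x a ⊓ wbelowE e x a' ≤ (e x s ⇨ I a) ⊓ (e x s ⇨ I a') :=
          inf_le_inf (wbelowE_le_himp hI hs x a) (wbelowE_le_himp hI hs x a')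
      _ = e x s ⇨ I a ⊓ I a' := himp_inf_distrib _ _ _ |>.symm
      _ ≤ e x s ⇨ I c := himp_le_himp_left (hI.inf_le_of_isJoin hjoin)

theorem scottOpenE_wbelowE (hord : IsLOrder e) (hc : CompleteE e)
    (H : ∀ x, IsSupE e (fun y => wbelowE e x y) x) (z : X) :
    ScottOpenE e (fun w => wbelowE e w z) := by
  refine ⟨fun x y => wbelowE_mono_left hord x y z, fun D hD s hs => ?_⟩
  have hI := IsIdealE.iSup_inf hD (isIdealE_wbelowE hord hc) (wbelowE_mono_left hord)
  have hs_le := wbelowE_le_himp hI (isSupE_iSup_inf hs H) s z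
  rw [hord.refl, top_himp] at hs_le
  exact hs_le.trans (iSup_mono fun d => (inf_comm _ _).le)

-- `lowerOf e (ptFilter (scottOpens e) x)` unfolds to the paper's `[x]^l`.
theorem lowerOf_ptFilter_le_wbelowE (x y : X) :
    lowerOf e (ptFilter (scottOpens e) x) y ≤ wbelowE e x y := by
  refine iSup_le fun A =>
    le_iInf fun I => le_iInf fun hI => le_iInf fun s => le_iInf fun hs => le_himp_iff.2 ?_
  obtain ⟨hup, hscott⟩ := A.2
  calc (A : X → L) x ⊓ subL A (upE e y) ⊓ e x s
        ≤ (⨆ w, (A : X → L) w ⊓ I w) ⊓ subL A (upE e y) := by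
        rw [inf_right_comm]
        exact inf_le_inf_right _ ((hup x s).trans (hscott I hI.1 s hs))
    _ ≤ I y := by
        rw [iSup_inf_eq]
        refine iSup_le fun w => le_trans ?_ (hI.2 w y)
        exact le_inf (inf_le_left.trans inf_le_right)
          ((inf_le_inf inf_le_left (iInf_le _ w)).trans inf_himp_le)

theorem wbelowE_le_lowerOf_ptFilter (hord : IsLOrder e) (hc : CompleteE e)
    (H : ∀ x, IsSupE e (fun y => wbelowE e x y) x) (x y : X) :
    wbelowE e x y ≤ lowerOf e (ptFilter (scottOpens e) x) y :=
  le_iSup_of_le ⟨_, scottOpenE_wbelowE hord hc H y⟩ <| le_inf le_rfl <|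
    le_iInf fun w => le_himp_iff'.2 (inf_le_left.trans (wbelowE_le hord w y))

end

/-- A complete `L`-ordered set `(X, e)` is an `L`-continuous lattice iff
`x = ⊔([x]^l)` for every `x`, where `[x]^l(y) = ⨆_{A ∈ σ_L(X)} A(x) ⊓ sub(A, ↑y)`. -/
theorem stmt11 [Order.Frame L] (e : X → X → L) (hord : IsLOrder e) (hc : CompleteE e) :
    (∀ x, IsSupE e (fun y => wbelowE e x y) x) ↔
    (∀ x, IsSupE e (fun y => ⨆ A : ↥(scottOpens e),
      (A : X → L) x ⊓ subL (A : X → L) (upE e y)) x) := by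
  constructor
  · intro H x
    exact (H x).of_le_of_le_down hord (wbelowE_le_lowerOf_ptFilter hord hc H x)
      fun y => (lowerOf_ptFilter_le_wbelowE x y).trans (wbelowE_le hord x y)
  · intro H x
    exact (H x).of_le_of_le_down hord (lowerOf_ptFilter_le_wbelowE x) (wbelowE_le hord x)
end
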